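/- arXiv:1806.02108 — 2 statements merged into one kernel-verified Lean document; each statement's English description precedes it below -/
import Mathlib

section
/- In the setup above (S a d-cluster tilting subcategory of C closed under Σ^d, t a 2d-cluster tilting object of C lying in S, T = add(t)): if s ∈ S and 0 ≤ i ≤ d−1, then index_T(Σ^i s) = (−1)^i index_T(s) in K_0^{sp}(T). -/
open CategoryTheory Category Limits Pretriangulated Opposite

universe v u

section Defs

variable {C : Type u} [Category.{v} C]

section Add

variable [Preadditive C] [HasFiniteBiproducts C]

/-- `x` lies in `add t`: it is a direct summand of a finite direct sum of copies of `t`. -/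
def inAdd (t x : C) : Prop :=
  ∃ (n : ℕ) (i : x ⟶ ⨁ (fun _ : Fin n => t)) (r : ⨁ (fun _ : Fin n => t) ⟶ x),
    i ≫ r = 𝟙 x

end Add

/-- A morphism lies in the radical of the category. -/
def radMor [Preadditive C] {x y : C} (f : x ⟶ y) : Prop :=
  ∀ g : y ⟶ x, IsIso (𝟙 x - f ≫ g)

/-- An object is indecomposable. -/
def IndecObj [Preadditive C] [HasBinaryBiproducts C] (s : C) : Prop :=
  ¬ IsZero s ∧ ∀ (a b : C), (s ≅ a ⊞ b) → IsZero a ∨ IsZero b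

/-- Every object has a precover by an object of `Tset` (contravariant finiteness). -/
def IsPrecovering (Tset : Set C) : Prop :=
  ∀ c : C, ∃ (x : C) (f : x ⟶ c), x ∈ Tset ∧
    ∀ x' ∈ Tset, ∀ g : x' ⟶ c, ∃ h : x' ⟶ x, h ≫ f = g

/-- Every object has a preenvelope by an object of `Tset` (covariant finiteness). -/
def IsPreenveloping (Tset : Set C) : Prop :=
  ∀ c : C, ∃ (x : C) (f : c ⟶ x), x ∈ Tset ∧
    ∀ x' ∈ Tset, ∀ g : c ⟶ x', ∃ h : x ⟶ x', f ≫ h = g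

/-- `f : x ⟶ c` is a `Tset`-cover: a right minimal `Tset`-approximation. -/
def IsTCover (Tset : Set C) {x c : C} (f : x ⟶ c) : Prop :=
  x ∈ Tset ∧ (∀ x' ∈ Tset, ∀ g : x' ⟶ c, ∃ h : x' ⟶ x, h ≫ f = g) ∧
    ∀ φ : x ⟶ x, φ ≫ f = f → IsIso φ

section Shift

variable [Preadditive C] [HasShift C ℤ]

/-- `Tset` is an `n`-cluster tilting subcategory: it is functorially finite and coincides with
both `Ext^{1..n-1}`-orthogonals of itself. -/
structure IsClusterTiltingSub (n : ℕ) (Tset : Set C) : Prop where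
  precovering : IsPrecovering Tset
  preenveloping : IsPreenveloping Tset
  mem_iff_ext₁ : ∀ c : C, c ∈ Tset ↔
    ∀ i : ℕ, 1 ≤ i → i ≤ n - 1 → ∀ x ∈ Tset, ∀ f : x ⟶ c⟦(i : ℤ)⟧, f = 0
  mem_iff_ext₂ : ∀ c : C, c ∈ Tset ↔
    ∀ i : ℕ, 1 ≤ i → i ≤ n - 1 → ∀ x ∈ Tset, ∀ f : c ⟶ x⟦(i : ℤ)⟧, f = 0

/-- `t` is an `n`-cluster tilting object: `add t` is an `n`-cluster tilting subcategory. -/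
def IsClusterTiltingObj [HasFiniteBiproducts C] (n : ℕ) (t : C) : Prop :=
  IsClusterTiltingSub n {x : C | inAdd t x}

end Shift

section Tri

variable [Preadditive C] [HasZeroObject C] [HasShift C ℤ]
  [∀ n : ℤ, (shiftFunctor C n).Additive] [Pretriangulated C]

/-- The Iyama–Yoshino star operation `X * Y` on full subcategories. -/
def star (X Y : Set C) : Set C :=
  {c | ∃ (x y : C) (f : x ⟶ c) (g : c ⟶ y) (h : y ⟶ x⟦(1 : ℤ)⟧),
    Triangle.mk f g h ∈ (distTriang C) ∧ x ∈ X ∧ y ∈ Y}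

/-- Iterated star operation `X₁ * X₂ * ⋯ * Xₘ`. -/
def starList : List (Set C) → Set C
  | [] => {c | IsZero c}
  | [X] => X
  | X :: Y :: L => star X (starList (Y :: L))

/-- A tower of triangles connecting the objects `cobj (m+1), cobj m, …, cobj 1, cobj 0`:
triangles `w (i+1) ⟶ cobj (i+1) ⟶ w i ⟶ (w (i+1))⟦1⟧` for `i < m`, with
`w 0 = cobj 0` and `w m = cobj (m+1)`. -/
structure TriTower (m : ℕ) (cobj : ℕ → C) where
  w : ℕ → C
  fmor : ∀ i : ℕ, w (i + 1) ⟶ cobj (i + 1)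
  gmor : ∀ i : ℕ, cobj (i + 1) ⟶ w i
  hmor : ∀ i : ℕ, w i ⟶ (w (i + 1))⟦(1 : ℤ)⟧
  mem : ∀ i < m, Triangle.mk (fmor i) (gmor i) (hmor i) ∈ distTriang C
  w_zero : w 0 = cobj 0
  w_top : w m = cobj (m + 1)

/-- The composite `w 0 ⟶ Σʲ (w j)` of the (suitably shifted) wavy morphisms of a tower. -/
noncomputable def towerComp {m : ℕ} {cobj : ℕ → C} (tw : TriTower m cobj) :
    ∀ j : ℕ, (tw.w 0 ⟶ (tw.w j)⟦(j : ℤ)⟧)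
  | 0 => (shiftFunctorZero' C ((0 : ℕ) : ℤ) (by simp)).inv.app (tw.w 0)
  | (j + 1) => towerComp tw j ≫ (shiftFunctor C (j : ℤ)).map (tw.hmor j) ≫
      (shiftFunctorAdd' C (1 : ℤ) (j : ℤ) ((j + 1 : ℕ) : ℤ) (by push_cast; ring)).inv.app
        (tw.w (j + 1))

/-- The full composite `cobj 0 ⟶ Σᵐ (cobj (m+1))` of the wavy morphisms of a tower. -/
noncomputable def towerGamma {m : ℕ} {cobj : ℕ → C} (tw : TriTower m cobj) :
    cobj 0 ⟶ (cobj (m + 1))⟦(m : ℤ)⟧ :=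
  eqToHom tw.w_zero.symm ≫ towerComp tw m ≫ eqToHom (by rw [tw.w_top])

/-- `cls` is constant on isomorphism classes of objects of `Tset` and additive on biproducts
of objects of `Tset`; quantifying over all such `cls` encodes identities in the split
Grothendieck group `K₀^{sp}(Tset)`. -/
def IsAddOn [HasFiniteBiproducts C] (Tset : Set C) {G : Type*} [AddCommGroup G]
    (cls : C → G) : Prop :=
  (∀ x y : C, x ∈ Tset → y ∈ Tset → Nonempty (x ≅ y) → cls x = cls y) ∧
  (∀ x y : C, x ∈ Tset → y ∈ Tset → cls (x ⊞ y) = cls x + cls y)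

/-- `ind` is the triangulated index with respect to `Tset`: for each `c` there is a tower of
triangles built from `Tset`-covers, and `ind c` is the alternating sum of the classes of its
`Tset`-objects. -/
def IsIndex [HasFiniteBiproducts C] (n : ℕ) (Tset : Set C) {G : Type*} [AddCommGroup G]
    (cls ind : C → G) : Prop :=
  ∀ c : C, ∃ (cobj : ℕ → C) (tw : TriTower (n - 1) cobj),
    cobj 0 = c ∧ (∀ i < n - 1, IsTCover Tset (tw.gmor i)) ∧ cobj n ∈ Tset ∧
    ind c = ∑ i ∈ Finset.range n, ((-1 : ℤ) ^ i) • cls (cobj (i + 1))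

/-- `ind` is the `(d+2)`-angulated index with respect to `Tset`: for each `s ∈ Sset` there is a
`(d+2)`-angle (encoded as a tower of triangles) `t_d → ⋯ → t_0 → s → Σ^d t_d` with `t_i ∈ Tset`
and radical maps, and `ind s` is the alternating sum of the classes of the `t_i`. -/
def IsHigherIndex [HasFiniteBiproducts C] (d : ℕ) (Tset Sset : Set C) {G : Type*}
    [AddCommGroup G] (cls ind : C → G) : Prop :=
  ∀ s ∈ Sset, ∃ (cobj : ℕ → C) (tw : TriTower d cobj),
    cobj 0 = s ∧ (∀ i, 1 ≤ i → i ≤ d + 1 → cobj i ∈ Tset) ∧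
    (∀ j : ℕ, j + 2 ≤ d → radMor (tw.gmor (j + 1) ≫ tw.fmor j)) ∧
    (∀ j : ℕ, (hj : j + 1 = d) →
      radMor ((eqToHom (show cobj (d + 1) = tw.w (j + 1) by rw [hj, tw.w_top]) :
        cobj (d + 1) ⟶ tw.w (j + 1)) ≫ tw.fmor j)) ∧
    ind s = ∑ i ∈ Finset.range (d + 1), ((-1 : ℤ) ^ i) • cls (cobj (i + 1))

/-- `t` is an Oppermann–Thomas cluster tilting object of the `(d+2)`-angulated category `Sset`:
`Hom(t, Σ^d t) = 0`, and every `s ∈ Sset` admits a `(d+2)`-angle (encoded as a tower)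
`t_d → ⋯ → t_0 → s → Σ^d t_d` with all `t_i ∈ add t`. -/
def IsOTClusterTilting [HasFiniteBiproducts C] (d : ℕ) (Sset : Set C) (t : C) : Prop :=
  t ∈ Sset ∧ (∀ f : t ⟶ t⟦(d : ℤ)⟧, f = 0) ∧
    ∀ s ∈ Sset, ∃ (cobj : ℕ → C) (tw : TriTower d cobj),
      cobj 0 = s ∧ ∀ i, 1 ≤ i → i ≤ d + 1 → inAdd t (cobj i)

/-- A `N`-Calabi–Yau structure on `Sset`: a bifunctorial perfect pairing
`Hom(x,y) × Hom(y, x⟦N⟧) → k`, encoding natural isomorphisms `Hom(x,y) ≅ D Hom(y, x⟦N⟧)`. -/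
structure CYData (k : Type*) [Field k] [Linear k C] (Sset : Set C) (N : ℤ) where
  pair : ∀ x y : C, (x ⟶ y) → (y ⟶ x⟦N⟧) → k
  add_left : ∀ x y, x ∈ Sset → y ∈ Sset → ∀ (f f' : x ⟶ y) (g : y ⟶ x⟦N⟧),
    pair x y (f + f') g = pair x y f g + pair x y f' g
  add_right : ∀ x y, x ∈ Sset → y ∈ Sset → ∀ (f : x ⟶ y) (g g' : y ⟶ x⟦N⟧),
    pair x y f (g + g') = pair x y f g + pair x y f g'
  smul_left : ∀ x y, x ∈ Sset → y ∈ Sset → ∀ (a : k) (f : x ⟶ y) (g : y ⟶ x⟦N⟧),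
    pair x y (a • f) g = a * pair x y f g
  smul_right : ∀ x y, x ∈ Sset → y ∈ Sset → ∀ (a : k) (f : x ⟶ y) (g : y ⟶ x⟦N⟧),
    pair x y f (a • g) = a * pair x y f g
  assoc : ∀ x y z, x ∈ Sset → y ∈ Sset → z ∈ Sset →
    ∀ (f : x ⟶ y) (g : y ⟶ z) (h : z ⟶ x⟦N⟧),
    pair x z (f ≫ g) h = pair x y f (g ≫ h)
  nondeg_left : ∀ x y, x ∈ Sset → y ∈ Sset → ∀ f : x ⟶ y,
    (∀ g : y ⟶ x⟦N⟧, pair x y f g = 0) → f = 0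
  nondeg_right : ∀ x y, x ∈ Sset → y ∈ Sset → ∀ g : y ⟶ x⟦N⟧,
    (∀ f : x ⟶ y, pair x y f g = 0) → g = 0

end Tri

end Defs

variable {C : Type u} [Category.{v} C]

/-!
If `Hom(T, Σ c) = 0`, the `T`-cover of `Σ c` is zero, so the index tower of `Σ c` is the tower of
`c` pushed up by one step and its terms are those of `c` with the opposite sign, except at the
top: there the last triangle of the tower of `c` has both outer terms in `T`, so it splits because
`Hom(T, Σ T) = 0`. Hence `index_T(Σ c) = -index_T(c)`. For `s ∈ S` and `1 ≤ j ≤ d - 1` we have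
`Hom(t, Σ^j s) = 0` since `t ∈ S`, and induction on `i` gives the sign `(-1)^i`. The base case is
invariance of the index under isomorphism: covers, hence index towers, are unique up to
isomorphism.
-/

section AlternatingSum

variable {G : Type*} [AddCommGroup G]

lemma alternating_sum_range_succ' (f : ℕ → G) (n : ℕ) :
    ∑ i ∈ Finset.range (n + 1), ((-1 : ℤ) ^ i) • f i =
      f 0 - ∑ i ∈ Finset.range n, ((-1 : ℤ) ^ i) • f (i + 1) := by
  rw [Finset.sum_range_succ', pow_zero, one_smul, sub_eq_neg_add, ← Finset.sum_neg_distrib]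
  congr 1
  refine Finset.sum_congr rfl fun i _ => ?_
  rw [pow_succ, mul_neg_one, neg_zsmul]

lemma alternating_sum_range_add_two_of_eq_add (f : ℕ → G) (e : ℕ) {x : G}
    (h : f e = f (e + 1) + x) :
    ∑ i ∈ Finset.range (e + 2), ((-1 : ℤ) ^ i) • f i =
      ∑ i ∈ Finset.range e, ((-1 : ℤ) ^ i) • f i + ((-1 : ℤ) ^ e) • x := by
  rw [Finset.sum_range_succ, Finset.sum_range_succ, h, pow_succ, mul_neg_one, neg_zsmul, smul_add]
  abel

end AlternatingSum

section AddClosure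

variable [Preadditive C] [HasFiniteBiproducts C] {t x y : C}

local instance : HasBinaryBiproducts C := hasBinaryBiproducts_of_finite_biproducts C

lemma inAdd_of_iso (e : x ≅ y) (hy : inAdd t y) : inAdd t x := by
  obtain ⟨n, i, r, hir⟩ := hy
  exact ⟨n, e.hom ≫ i, r ≫ e.inv, by simp [reassoc_of% hir]⟩

lemma inAdd_biprod (hx : inAdd t x) (hy : inAdd t y) : inAdd t (x ⊞ y) := by
  obtain ⟨n, ix, rx, hx⟩ := hx
  obtain ⟨m, iy, ry, hy⟩ := hy
  let u : (⨁ fun _ : Fin n => t) ⊞ (⨁ fun _ : Fin m => t) ⟶ ⨁ fun _ : Fin (n + m) => t :=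
    biproduct.lift fun k => Fin.addCases (motive := fun _ => _ ⟶ t)
      (fun k₁ => biprod.fst ≫ biproduct.π _ k₁) (fun k₂ => biprod.snd ≫ biproduct.π _ k₂) k
  let v : (⨁ fun _ : Fin (n + m) => t) ⟶ (⨁ fun _ : Fin n => t) ⊞ (⨁ fun _ : Fin m => t) :=
    biprod.lift (biproduct.lift fun k₁ => biproduct.π _ (Fin.castAdd m k₁))
      (biproduct.lift fun k₂ => biproduct.π _ (Fin.natAdd n k₂))
  have huv : u ≫ v = 𝟙 _ := by
    apply biprod.hom_ext <;> apply biproduct.hom_ext <;> intro j <;> simp [u, v]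
  refine ⟨n + m, biprod.map ix iy ≫ u, v ≫ biprod.map rx ry, ?_⟩
  rw [Category.assoc, reassoc_of% huv]
  ext <;> simp [hx, hy]

lemma eq_zero_of_inAdd (hx : inAdd t x) (h : ∀ f : t ⟶ y, f = 0) (g : x ⟶ y) : g = 0 := by
  obtain ⟨n, i, r, hir⟩ := hx
  have hr : r ≫ g = 0 := biproduct.hom_ext' _ _ fun j => by
    rw [comp_zero, ← Category.assoc]
    exact h _
  rw [← Category.id_comp g, ← hir, Category.assoc, hr, comp_zero]

end AddClosure

namespace IsTCover

variable {T : Set C} {x x' c c' : C}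

lemma comp_iso {f : x ⟶ c} (hf : IsTCover T f) (e : c ≅ c') : IsTCover T (f ≫ e.hom) := by
  obtain ⟨hx, hfac, hmin⟩ := hf
  refine ⟨hx, fun x' hx' g => ?_, fun φ hφ => hmin φ ?_⟩
  · obtain ⟨h, hh⟩ := hfac x' hx' (g ≫ e.inv)
    exact ⟨h, by simp [reassoc_of% hh]⟩
  · rwa [← cancel_mono e.hom, Category.assoc]

lemma exists_iso {f : x ⟶ c} {f' : x' ⟶ c} (hf : IsTCover T f) (hf' : IsTCover T f') :
    ∃ e : x ≅ x', e.hom ≫ f' = f := by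
  obtain ⟨hx, hfac, hmin⟩ := hf
  obtain ⟨hx', hfac', hmin'⟩ := hf'
  obtain ⟨h, hh⟩ := hfac' x hx f
  obtain ⟨h', hh'⟩ := hfac x' hx' f'
  have : IsIso (h ≫ h') := hmin _ (by rw [Category.assoc, hh', hh])
  have : IsIso (h' ≫ h) := hmin' _ (by rw [Category.assoc, hh, hh'])
  have : IsSplitMono h :=
    IsSplitMono.mk' ⟨h' ≫ inv (h ≫ h'), by rw [← Category.assoc, IsIso.hom_inv_id]⟩
  have : IsSplitEpi h :=
    IsSplitEpi.mk' ⟨inv (h' ≫ h) ≫ h', by rw [Category.assoc, IsIso.inv_hom_id]⟩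
  have : IsIso h := isIso_of_mono_of_isSplitEpi h
  exact ⟨asIso h, hh⟩

lemma isZero_of_eq_zero [Preadditive C] {f : x ⟶ c} (hf : IsTCover T f) (h0 : f = 0) :
    IsZero x := by
  have : IsIso (0 : x ⟶ x) := hf.2.2 0 (by rw [h0, comp_zero])
  exact (IsZero.iff_id_eq_zero x).2 (isIsoZeroSelfEquiv x this)

end IsTCover

section Pretriangulated

variable [Preadditive C] [HasZeroObject C] [HasShift C ℤ]
  [∀ n : ℤ, (shiftFunctor C n).Additive] [Pretriangulated C]

lemma nonempty_iso_of_isTCover_of_distTriang {T : Set C} {a b c a' b' c' : C} {f : a ⟶ b}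
    {g : b ⟶ c} {h : c ⟶ a⟦(1 : ℤ)⟧} {f' : a' ⟶ b'} {g' : b' ⟶ c'} {h' : c' ⟶ a'⟦(1 : ℤ)⟧}
    (hT : Triangle.mk f g h ∈ distTriang C) (hT' : Triangle.mk f' g' h' ∈ distTriang C)
    (hg : IsTCover T g) (hg' : IsTCover T g') (e : c ≅ c') :
    Nonempty (b ≅ b') ∧ Nonempty (a ≅ a') := by
  obtain ⟨eb, heb⟩ := (hg.comp_iso e).exists_iso hg'
  obtain ⟨eT, -, -⟩ := exists_iso_of_arrow_iso _ _ (rot_of_distTriang _ hT)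
    (rot_of_distTriang _ hT') (Arrow.isoMk eb e heb)
  exact ⟨⟨eb⟩, ⟨(shiftFunctor C (1 : ℤ)).preimageIso (Triangle.π₃.mapIso eT)⟩⟩

namespace TriTower

variable {T : Set C} {m₁ m₂ : ℕ} {cobj₁ cobj₂ : ℕ → C}

lemma nonempty_iso_w_add (tw₁ : TriTower m₁ cobj₁) (tw₂ : TriTower m₂ cobj₂)
    (hc₁ : ∀ i < m₁, IsTCover T (tw₁.gmor i)) (hc₂ : ∀ i < m₂, IsTCover T (tw₂.gmor i))
    {a b : ℕ} (e : tw₁.w a ≅ tw₂.w b) :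
    ∀ j, j + a ≤ m₁ → j + b ≤ m₂ → Nonempty (tw₁.w (j + a) ≅ tw₂.w (j + b))
  | 0, _, _ => by
    rw [Nat.zero_add, Nat.zero_add]
    exact ⟨e⟩
  | j + 1, h₁, h₂ => by
    obtain ⟨e'⟩ := nonempty_iso_w_add tw₁ tw₂ hc₁ hc₂ e j (by omega) (by omega)
    rw [Nat.add_right_comm j 1 a, Nat.add_right_comm j 1 b]
    exact (nonempty_iso_of_isTCover_of_distTriang (tw₁.mem _ (by omega))
      (tw₂.mem _ (by omega)) (hc₁ _ (by omega)) (hc₂ _ (by omega)) e').2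

lemma nonempty_iso_cobj_add (tw₁ : TriTower m₁ cobj₁) (tw₂ : TriTower m₂ cobj₂)
    (hc₁ : ∀ i < m₁, IsTCover T (tw₁.gmor i)) (hc₂ : ∀ i < m₂, IsTCover T (tw₂.gmor i))
    {a b : ℕ} (e : tw₁.w a ≅ tw₂.w b) {j : ℕ} (h₁ : j + a < m₁) (h₂ : j + b < m₂) :
    Nonempty (cobj₁ (j + a + 1) ≅ cobj₂ (j + b + 1)) := by
  obtain ⟨e'⟩ := nonempty_iso_w_add tw₁ tw₂ hc₁ hc₂ e j h₁.le h₂.le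
  exact (nonempty_iso_of_isTCover_of_distTriang (tw₁.mem _ h₁) (tw₂.mem _ h₂) (hc₁ _ h₁)
    (hc₂ _ h₂) e').1

end TriTower

variable [HasFiniteBiproducts C] {G : Type*} [AddCommGroup G] {T : Set C} {cls : C → G}

namespace IsAddOn

lemma eq_zero_of_isZero (hcls : IsAddOn T cls) (hT : ∀ x y : C, x ∈ T → y ∈ T → (x ⊞ y) ∈ T)
    {x : C} (hx : x ∈ T) (hz : IsZero x) : cls x = 0 := by
  have h := hcls.2 x x hx hx
  rw [hcls.1 _ _ (hT x x hx hx) hx ⟨((biprod_isZero_iff x x).2 ⟨hz, hz⟩).iso hz⟩] at h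
  exact left_eq_add.1 h

-- Since `Hom(T, Σ T) = 0`, such a triangle splits.
lemma eq_add_of_distTriang (hcls : IsAddOn T cls)
    (hT_biprod : ∀ x y : C, x ∈ T → y ∈ T → (x ⊞ y) ∈ T)
    (hT_ext : ∀ x y : C, x ∈ T → y ∈ T → ∀ f : x ⟶ y⟦(1 : ℤ)⟧, f = 0)
    {a b c : C} {f : a ⟶ b} {g : b ⟶ c} {h : c ⟶ a⟦(1 : ℤ)⟧}
    (hT : Triangle.mk f g h ∈ distTriang C) (ha : a ∈ T) (hb : b ∈ T) (hc : c ∈ T) :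
    cls b = cls a + cls c := by
  obtain ⟨e, -, -⟩ := exists_iso_binaryBiproduct_of_distTriang _ hT (hT_ext _ _ hc ha h)
  rw [hcls.1 _ _ hb (hT_biprod _ _ ha hc) ⟨e⟩, hcls.2 _ _ ha hc]

end IsAddOn

lemma TriTower.alternating_sum_eq_of_iso (hcls : IsAddOn T cls) {m : ℕ} {cobj₁ cobj₂ : ℕ → C}
    (tw₁ : TriTower m cobj₁) (tw₂ : TriTower m cobj₂)
    (hc₁ : ∀ i < m, IsTCover T (tw₁.gmor i)) (hc₂ : ∀ i < m, IsTCover T (tw₂.gmor i))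
    (htop₁ : cobj₁ (m + 1) ∈ T) (htop₂ : cobj₂ (m + 1) ∈ T) (e : tw₁.w 0 ≅ tw₂.w 0) :
    ∑ i ∈ Finset.range (m + 1), ((-1 : ℤ) ^ i) • cls (cobj₁ (i + 1)) =
      ∑ i ∈ Finset.range (m + 1), ((-1 : ℤ) ^ i) • cls (cobj₂ (i + 1)) := by
  refine Finset.sum_congr rfl fun i hi => congrArg _ ?_
  rcases (Finset.mem_range_succ_iff.1 hi).lt_or_eq with hi | rfl
  · exact hcls.1 _ _ (hc₁ i hi).1 (hc₂ i hi).1 (tw₁.nonempty_iso_cobj_add tw₂ hc₁ hc₂ e hi hi)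
  · obtain ⟨e'⟩ := tw₁.nonempty_iso_w_add tw₂ hc₁ hc₂ e i le_rfl le_rfl
    exact hcls.1 _ _ htop₁ htop₂ ⟨eqToIso tw₁.w_top.symm ≪≫ e' ≪≫ eqToIso tw₂.w_top⟩

namespace IsIndex

variable {ind : C → G}

lemma eq_of_iso {n : ℕ} (hind : IsIndex n T cls ind) (hcls : IsAddOn T cls) {c c' : C}
    (e : c ≅ c') : ind c = ind c' := by
  obtain ⟨cobj, tw, hc0, hcov, htop, hsum⟩ := hind c
  obtain ⟨cobj', tw', hc0', hcov', htop', hsum'⟩ := hind c'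
  cases n with
  | zero => simp only [hsum, hsum', Finset.sum_range_zero]
  | succ m =>
    rw [hsum, hsum']
    exact TriTower.alternating_sum_eq_of_iso hcls tw tw' hcov hcov' htop htop'
      (eqToIso (tw.w_zero.trans hc0) ≪≫ e ≪≫ eqToIso (tw'.w_zero.trans hc0').symm)

lemma shift_one_eq_neg {n : ℕ} (hn : 2 ≤ n) (hind : IsIndex n T cls ind)
    (hcls : IsAddOn T cls) (hT_iso : ∀ x y : C, (x ≅ y) → y ∈ T → x ∈ T)
    (hT_biprod : ∀ x y : C, x ∈ T → y ∈ T → (x ⊞ y) ∈ T)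
    (hT_ext : ∀ x y : C, x ∈ T → y ∈ T → ∀ f : x ⟶ y⟦(1 : ℤ)⟧, f = 0)
    {c : C} (hc : ∀ x ∈ T, ∀ f : x ⟶ c⟦(1 : ℤ)⟧, f = 0) :
    ind (c⟦(1 : ℤ)⟧) = -ind c := by
  obtain ⟨e, rfl⟩ : ∃ e, n = e + 2 := ⟨n - 2, by omega⟩
  obtain ⟨cobj, tw, hc0, hcov, htop, hsum⟩ := hind c
  obtain ⟨cobj', tw', hc0', hcov', htop', hsum'⟩ := hind (c⟦(1 : ℤ)⟧)
  have hw0 : tw.w 0 = c := tw.w_zero.trans hc0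
  have hw0' : tw'.w 0 = c⟦(1 : ℤ)⟧ := tw'.w_zero.trans hc0'
  have hc' : ∀ x ∈ T, ∀ f : x ⟶ tw'.w 0, f = 0 := by
    rw [hw0']
    exact hc
  have hzero : IsZero (cobj' 1) :=
    (hcov' 0 (by omega)).isZero_of_eq_zero (hc' _ (hcov' 0 (by omega)).1 _)
  have : IsIso (tw'.hmor 0) := (Triangle.isZero₂_iff_isIso₃ _ (tw'.mem 0 (by omega))).1 hzero
  have hw1 : tw'.w 1 ≅ tw.w 0 := (shiftFunctor C (1 : ℤ)).preimageIso
    ((asIso (tw'.hmor 0)).symm ≪≫ eqToIso hw0' ≪≫ (shiftFunctor C (1 : ℤ)).mapIso (eqToIso hw0.symm))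
  obtain ⟨ewe⟩ := tw'.nonempty_iso_w_add tw hcov' hcov hw1 e (by omega) (by omega)
  have hwe : tw.w e ∈ T := hT_iso _ _ (ewe.symm ≪≫ eqToIso tw'.w_top) htop'
  have hsplit : cls (cobj (e + 1)) = cls (cobj (e + 2)) + cls (tw.w e) := by
    have htop_eq : tw.w (e + 1) = cobj (e + 2) := tw.w_top
    rw [← htop_eq]
    exact hcls.eq_add_of_distTriang hT_biprod hT_ext (tw.mem e (by omega)) (htop_eq ▸ htop)
      (hcov e (by omega)).1 hwe
  rw [hsum', hsum, alternating_sum_range_succ', hcls.eq_zero_of_isZero hT_biprod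
    (hcov' 0 (by omega)).1 hzero, zero_sub,
    alternating_sum_range_add_two_of_eq_add (fun i => cls (cobj (i + 1))) e hsplit,
    Finset.sum_range_succ]
  congr 2
  · refine Finset.sum_congr rfl fun i hi => congrArg _ ?_
    have hi : i < e := Finset.mem_range.1 hi
    exact hcls.1 _ _ (hcov' (i + 1) (by omega)).1 (hcov i (by omega)).1
      (tw'.nonempty_iso_cobj_add tw hcov' hcov hw1 (j := i) (by omega) (by omega))
  · exact congrArg _ (hcls.1 _ _ htop' hwe ⟨eqToIso tw'.w_top.symm ≪≫ ewe⟩)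

end IsIndex

end Pretriangulated

theorem stmt14 (k : Type*) [Field k] [Preadditive C] [CategoryTheory.Linear k C] [HasZeroObject C]
    [HasShift C ℤ] [∀ n : ℤ, (shiftFunctor C n).Additive] [Pretriangulated C]
    [HasFiniteBiproducts C] [IsIdempotentComplete C]
    [∀ X Y : C, FiniteDimensional k (X ⟶ Y)]
    (d : ℕ) (hd : 1 ≤ d) (t : C) (ht : IsClusterTiltingObj (2 * d) t)
    (Sset : Set C) (hS : IsClusterTiltingSub d Sset)
    (hSshift : ∀ s : C, s ∈ Sset ↔ s⟦(d : ℤ)⟧ ∈ Sset) (htS : t ∈ Sset)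
    {G : Type*} [AddCommGroup G] (cls indC : C → G)
    (hcls : IsAddOn {x : C | inAdd t x} cls)
    (hindC : IsIndex (2 * d) {x : C | inAdd t x} cls indC)
    (s : C) (hs : s ∈ Sset) (i : ℕ) (hi : i ≤ d - 1) :
    indC (s⟦(i : ℤ)⟧) = ((-1 : ℤ) ^ i) • indC s := by
  have hT_ext : ∀ x y : C, inAdd t x → inAdd t y → ∀ f : x ⟶ y⟦(1 : ℤ)⟧, f = 0 :=
    fun x y hx hy => (ht.mem_iff_ext₁ y).1 hy 1 le_rfl (by omega) x hx
  induction i with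
  | zero =>
    rw [pow_zero, one_smul]
    exact hindC.eq_of_iso hcls ((shiftFunctorZero' C ((0 : ℕ) : ℤ) (by simp)).app s)
  | succ i ih =>
    have e : s⟦((i + 1 : ℕ) : ℤ)⟧ ≅ (s⟦(i : ℤ)⟧)⟦(1 : ℤ)⟧ :=
      (shiftFunctorAdd' C (i : ℤ) 1 ((i + 1 : ℕ) : ℤ) (by push_cast; ring)).app s
    have hvan : ∀ x, inAdd t x → ∀ f : x ⟶ (s⟦(i : ℤ)⟧)⟦(1 : ℤ)⟧, f = 0 :=
      fun x hx => eq_zero_of_inAdd hx fun f => (cancel_mono e.inv).1 <| by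
        rw [zero_comp]
        exact (hS.mem_iff_ext₁ s).1 hs (i + 1) (by omega) (by omega) t htS _
    calc indC (s⟦((i + 1 : ℕ) : ℤ)⟧)
        = indC ((s⟦(i : ℤ)⟧)⟦(1 : ℤ)⟧) := hindC.eq_of_iso hcls e
      _ = -indC (s⟦(i : ℤ)⟧) := hindC.shift_one_eq_neg (by omega) hcls
          (fun _ _ e hy => inAdd_of_iso e hy) (fun _ _ => inAdd_biprod) hT_ext hvan
      _ = ((-1 : ℤ) ^ (i + 1)) • indC s := by
        rw [ih (by omega), pow_succ, mul_neg_one, neg_zsmul]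
end

section
/- Dichotomy lemma: assume additionally that S is 2d-Calabi–Yau, i.e. Hom_S(s,s') ≅ D Hom_S(s', (Σ^d)² s) naturally, where D is k-linear duality. Let s_0, s_{d+1} be indecomposable objects of S with dim_k Hom_S(s_0, Σ^d s_{d+1}) = 1 (an exchange pair), with ensuing (d+2)-angles s_{d+1} → x_d → ⋯ → x_1 → s_0 →γ₀ Σ^d s_{d+1} and s_0 → y_1 → ⋯ → y_d → s_{d+1} →γ_{d+1} Σ^d s_0, both with nonzero final morphism. Then Fγ₀ = 0 or Fγ_{d+1} = 0, where F = Hom_S(t,−) and t is an Oppermann–Thomas cluster tilting object of S. -/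
open CategoryTheory Category Limits Pretriangulated Opposite

universe v u

/-! The Calabi–Yau pairing transports a nonzero composite `t ⟶ s_{d+1} ⟶ Σ^d s_0` to a nonzero
morphism `s_0 ⟶ Σ^d t ⟶ Σ^d s_{d+1}`. As `Hom(s_0, Σ^d s_{d+1})` is a line, that morphism is a
nonzero multiple of `γ₀`; so if also some `t ⟶ s_0` does not vanish against `γ₀`, it does not vanish
against `s_0 ⟶ Σ^d t` either, contradicting `Hom(t, Σ^d t) = 0`. -/

variable {C : Type u} [Category.{v} C]

theorem comp_ne_zero_of_finrank_eq_one {k : Type*} [Field k] [Preadditive C] [Linear k C]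
    {t x w : C} (hdim : Module.finrank k (x ⟶ w) = 1) {u : t ⟶ x} {γ ε : x ⟶ w}
    (hγ : u ≫ γ ≠ 0) (hε : ε ≠ 0) : u ≫ ε ≠ 0 := by
  have hγ₀ : γ ≠ 0 := fun h => hγ (by rw [h, comp_zero])
  obtain ⟨c, rfl⟩ := (finrank_eq_one_iff_of_nonzero' γ hγ₀).mp hdim ε
  have hc : c ≠ 0 := by rintro rfl; exact hε (zero_smul k γ)
  rw [Linear.comp_smul]
  exact smul_ne_zero hc hγ

namespace CYData

variable [Preadditive C] [HasShift C ℤ] {k : Type*} [Field k] [Linear k C] {Sset : Set C} {N : ℤ}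

theorem pair_zero_left (cy : CYData k Sset N) {x y : C} (hx : x ∈ Sset) (hy : y ∈ Sset)
    (g : y ⟶ x⟦N⟧) : cy.pair x y 0 g = 0 := by
  simpa using cy.smul_left x y hx hy 0 0 g

theorem exists_pair_ne_zero (cy : CYData k Sset N) {x y : C} (hx : x ∈ Sset) (hy : y ∈ Sset)
    {g : y ⟶ x⟦N⟧} (hg : g ≠ 0) : ∃ f : x ⟶ y, cy.pair x y f g ≠ 0 := by
  by_contra! h
  exact hg (cy.nondeg_right x y hx hy g h)

theorem exists_comp_shift_map_ne_zero (cy : CYData k Sset N) {m n : ℤ} (hN : m + n = N)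
    {x y t : C} (hx : x ∈ Sset) (ht : t⟦n⟧ ∈ Sset) (hy : y⟦n⟧ ∈ Sset) {τ : t ⟶ y} {δ : y ⟶ x⟦m⟧}
    (hτδ : τ ≫ δ ≠ 0) : ∃ φ : x ⟶ t⟦n⟧, φ ≫ τ⟦n⟧' ≠ 0 := by
  set ψ : y⟦n⟧ ⟶ x⟦N⟧ := δ⟦n⟧' ≫ (shiftFunctorAdd' C m n N hN).inv.app x
  have hψ : τ⟦n⟧' ≫ ψ ≠ 0 := by
    intro h
    apply hτδ
    apply (shiftFunctor C n).map_injective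
    rwa [Functor.map_comp, Functor.map_zero, ← Preadditive.IsIso.comp_right_eq_zero _
      ((shiftFunctorAdd' C m n N hN).inv.app x), Category.assoc]
  obtain ⟨φ, hφ⟩ := cy.exists_pair_ne_zero hx ht hψ
  refine ⟨φ, fun h => hφ ?_⟩
  rw [← cy.assoc _ _ _ hx ht hy, h, cy.pair_zero_left hx hy]

theorem comp_eq_zero_or_comp_eq_zero (cy : CYData k Sset N) {m n : ℤ} (hN : m + n = N)
    {x y t : C} (hx : x ∈ Sset) (ht : t⟦n⟧ ∈ Sset) (hy : y⟦n⟧ ∈ Sset) (htt : ∀ f : t ⟶ t⟦n⟧, f = 0)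
    (hdim : Module.finrank k (x ⟶ y⟦n⟧) = 1) (u : t ⟶ x) (γ : x ⟶ y⟦n⟧) (τ : t ⟶ y)
    (δ : y ⟶ x⟦m⟧) : u ≫ γ = 0 ∨ τ ≫ δ = 0 := by
  by_contra! ⟨hu, hτ⟩
  obtain ⟨φ, hφ⟩ := cy.exists_comp_shift_map_ne_zero hN hx ht hy hτ
  exact comp_ne_zero_of_finrank_eq_one hdim hu hφ
    (by rw [← Category.assoc, htt (u ≫ φ), zero_comp])

end CYData

theorem stmt17 (k : Type*) [Field k] [Preadditive C] [CategoryTheory.Linear k C] [HasZeroObject C]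
    [HasShift C ℤ] [∀ n : ℤ, (shiftFunctor C n).Additive] [Pretriangulated C]
    [HasFiniteBiproducts C] [IsIdempotentComplete C]
    [∀ X Y : C, FiniteDimensional k (X ⟶ Y)]
    (d : ℕ) (hd : 1 ≤ d) (t : C) (ht : IsClusterTiltingObj (2 * d) t)
    (Sset : Set C) (hS : IsClusterTiltingSub d Sset)
    (hSshift : ∀ s : C, s ∈ Sset ↔ s⟦(d : ℤ)⟧ ∈ Sset) (htS : t ∈ Sset)
    (hOT : IsOTClusterTilting d Sset t)
    (cy : CYData k Sset (2 * (d : ℤ)))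
    (s0 sd1 : C) (hs0 : s0 ∈ Sset) (hsd1 : sd1 ∈ Sset)
    (hi0 : IndecObj s0) (hid1 : IndecObj sd1)
    (hdim : Module.finrank k (s0 ⟶ sd1⟦(d : ℤ)⟧) = 1)
    (cobj cobj' : ℕ → C) (tw : TriTower d cobj) (tw' : TriTower d cobj')
    (hc0 : cobj 0 = s0) (hctop : cobj (d + 1) = sd1)
    (hc0' : cobj' 0 = sd1) (hctop' : cobj' (d + 1) = s0)
    (hcS : ∀ i, i ≤ d + 1 → cobj i ∈ Sset) (hcS' : ∀ i, i ≤ d + 1 → cobj' i ∈ Sset)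
    (hγ0 : towerGamma tw ≠ 0) (hγd1 : towerGamma tw' ≠ 0) :
    (∀ u : t ⟶ cobj 0, u ≫ towerGamma tw = 0) ∨
      (∀ u : t ⟶ cobj' 0, u ≫ towerGamma tw' = 0) := by
  subst hc0 hc0'
  by_contra! ⟨⟨u, hu⟩, τ, hτ⟩
  have hγ : cobj (d + 1)⟦(d : ℤ)⟧ = cobj' 0⟦(d : ℤ)⟧ := by rw [hctop]
  have hδ : cobj' (d + 1)⟦(d : ℤ)⟧ = cobj 0⟦(d : ℤ)⟧ := by rw [hctop']
  rcases cy.comp_eq_zero_or_comp_eq_zero (by ring) hs0 ((hSshift t).mp htS)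
      ((hSshift _).mp hsd1) hOT.2.1 hdim u (towerGamma tw ≫ eqToHom hγ) τ
      (towerGamma tw' ≫ eqToHom hδ) with h | h
  · rw [← assoc, Preadditive.IsIso.comp_right_eq_zero] at h
    exact hu h
  · rw [← assoc, Preadditive.IsIso.comp_right_eq_zero] at h
    exact hτ h
end
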